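/- L^p-continuity of the p-Laplace flux in the degenerate range: let p ∈ [2, ∞) with conjugate exponent p' = p/(p−1). There exists a constant C > 0 depending only on p such that for every measure space (Ω, μ) and all measurable f, g : Ω → ℝ^d with ‖f‖_{L^p(μ)} < ∞ and ‖g‖_{L^p(μ)} < ∞, one has ‖A∘f − A∘g‖_{L^{p'}(μ)} ≤ C ‖f − g‖_{L^p(μ)} (‖f‖_{L^p(μ)} + ‖g‖_{L^p(μ)})^{p−2}. -/

import Mathlib

/-!
Put `q = p - 2` and assume `|b| ≤ |a|`. Splitting `A(a) - A(b) = |a|^q (a - b) + (|a|^q - |b|^q) b`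
and using `|b| (|a|^q - |b|^q) ≤ (q + 1) (|a| - |b|) |a|^q` (Bernoulli's inequality for `q ≥ 1`,
`t ≤ t^q` on `[0, 1]` for `q ≤ 1`) gives the pointwise bound
`|A(a) - A(b)| ≤ p |a - b| (|a| + |b|)^{p-2}`. Since `1/p' = 1/p + (p-2)/p`, Hölder's inequality
with exponents `p` and `p / (p - 2)`, followed by Minkowski's inequality for `|f| + |g|`,
integrates this to the claim with `C = p`.
-/

open MeasureTheory

/-- The p-Laplace flux `A(τ) = |τ|^{p-2} τ` (with `A(0) = 0`). -/
noncomputable def pFlux (d : ℕ) (p : ℝ) (τ : EuclideanSpace ℝ (Fin d)) :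
    EuclideanSpace ℝ (Fin d) := ‖τ‖ ^ (p - 2) • τ

/-- The `L^q` norm `(∫_Ω |h|^q dμ)^{1/q}` of a vector-valued function, in `[0, ∞]`. -/
noncomputable def vecLpNorm {Ω : Type*} [MeasurableSpace Ω] (μ : Measure Ω) {d : ℕ}
    (h : Ω → EuclideanSpace ℝ (Fin d)) (q : ℝ) : ENNReal :=
  (∫⁻ ω, ENNReal.ofReal (‖h ω‖ ^ q) ∂μ) ^ (1 / q)

lemma one_sub_rpow_le_mul_one_sub {q t : ℝ} (hq : 0 ≤ q) (ht0 : 0 ≤ t) (ht1 : t ≤ 1) :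
    1 - t ^ q ≤ (q + 1) * (1 - t) := by
  rcases le_total q 1 with hq1 | hq1
  · nlinarith [Real.self_le_rpow_of_le_one ht0 ht1 hq1]
  · have bernoulli := one_add_mul_self_le_rpow_one_add (by linarith : -1 ≤ t - 1) hq1
    rw [add_sub_cancel] at bernoulli
    nlinarith

lemma mul_rpow_sub_rpow_le {q x y : ℝ} (hq : 0 ≤ q) (hx : 0 ≤ x) (hxy : x ≤ y) :
    x * (y ^ q - x ^ q) ≤ (q + 1) * (y - x) * y ^ q := by
  rcases (hx.trans hxy).eq_or_lt with rfl | hy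
  · simp [le_antisymm hxy hx]
  set t := x / y
  have hx_eq : x = t * y := (div_mul_cancel₀ x hy.ne').symm
  have ht0 : 0 ≤ t := div_nonneg hx hy.le
  have ht1 : t ≤ 1 := (div_le_one hy).2 hxy
  have hyq : 0 ≤ y ^ q := Real.rpow_nonneg hy.le q
  calc x * (y ^ q - x ^ q) = x * y ^ q * (1 - t ^ q) := by
        rw [hx_eq, Real.mul_rpow ht0 hy.le]; ring
    _ ≤ x * y ^ q * ((q + 1) * (1 - t)) :=
        mul_le_mul_of_nonneg_left (one_sub_rpow_le_mul_one_sub hq ht0 ht1) (mul_nonneg hx hyq)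
    _ = t * ((q + 1) * (y - x) * y ^ q) := by rw [hx_eq]; ring
    _ ≤ (q + 1) * (y - x) * y ^ q :=
        mul_le_of_le_one_left (by have := sub_nonneg.2 hxy; positivity) ht1

lemma norm_rpow_smul_sub_rpow_smul_le {E : Type*} [NormedAddCommGroup E] [NormedSpace ℝ E]
    {q : ℝ} (hq : 0 ≤ q) (a b : E) :
    ‖‖a‖ ^ q • a - ‖b‖ ^ q • b‖ ≤ (q + 2) * ‖a - b‖ * (‖a‖ + ‖b‖) ^ q := by
  wlog hba : ‖b‖ ≤ ‖a‖ generalizing a b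
  · rw [norm_sub_rev, norm_sub_rev a, add_comm ‖a‖]
    exact this b a (le_of_not_ge hba)
  have haq : 0 ≤ ‖a‖ ^ q := Real.rpow_nonneg (norm_nonneg a) q
  have hmono : ‖b‖ ^ q ≤ ‖a‖ ^ q := Real.rpow_le_rpow (norm_nonneg b) hba hq
  have hdecomp : ‖a‖ ^ q • a - ‖b‖ ^ q • b = ‖a‖ ^ q • (a - b) + (‖a‖ ^ q - ‖b‖ ^ q) • b := by
    rw [smul_sub, sub_smul]; abel
  have hb := mul_rpow_sub_rpow_le hq (norm_nonneg b) hba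
  have hab : ‖a‖ - ‖b‖ ≤ ‖a - b‖ := norm_sub_norm_le a b
  calc ‖‖a‖ ^ q • a - ‖b‖ ^ q • b‖
      ≤ ‖a‖ ^ q * ‖a - b‖ + (‖a‖ ^ q - ‖b‖ ^ q) * ‖b‖ := by
        rw [hdecomp]
        refine (norm_add_le _ _).trans_eq ?_
        rw [norm_smul, norm_smul, Real.norm_of_nonneg haq, Real.norm_of_nonneg (by linarith)]
    _ ≤ (q + 2) * ‖a - b‖ * ‖a‖ ^ q := by
        nlinarith [mul_le_mul_of_nonneg_right hab (mul_nonneg (by linarith : 0 ≤ q + 1) haq)]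
    _ ≤ (q + 2) * ‖a - b‖ * (‖a‖ + ‖b‖) ^ q := by
        gcongr
        linarith [norm_nonneg b]

lemma norm_pFlux_sub_pFlux_le {d : ℕ} {p : ℝ} (hp : 2 ≤ p) (a b : EuclideanSpace ℝ (Fin d)) :
    ‖pFlux d p a - pFlux d p b‖ ≤ p * ‖a - b‖ * (‖a‖ + ‖b‖) ^ (p - 2) := by
  have := norm_rpow_smul_sub_rpow_smul_le (by linarith : 0 ≤ p - 2) a b
  rwa [sub_add_cancel] at this

lemma vecLpNorm_eq_eLpNorm' {Ω : Type*} [MeasurableSpace Ω] (μ : Measure Ω) {d : ℕ}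
    (h : Ω → EuclideanSpace ℝ (Fin d)) {q : ℝ} (hq : 0 ≤ q) :
    vecLpNorm μ h q = eLpNorm' h q μ := by
  simp only [vecLpNorm, eLpNorm', ← ofReal_norm, ENNReal.ofReal_rpow_of_nonneg (norm_nonneg _) hq]

section LpSeminorm

variable {α E F G : Type*} [MeasurableSpace α] {μ : Measure α}
  [NormedAddCommGroup E] [NormedAddCommGroup F] [NormedAddCommGroup G]

lemma eLpNorm'_le_mul_eLpNorm'_mul_eLpNorm'_rpow {h : α → G} {u : α → E} {w : α → F}
    (hu : AEStronglyMeasurable u μ) (hw : AEStronglyMeasurable w μ) {c : NNReal} {r : ℝ}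
    (hr : 2 ≤ r) (hbound : ∀ᵐ x ∂μ, ‖h x‖ ≤ c * ‖u x‖ * ‖w x‖ ^ (r - 2)) :
    eLpNorm' h (r / (r - 1)) μ ≤ c * eLpNorm' u r μ * eLpNorm' w r μ ^ (r - 2) := by
  -- the second Hölder exponent `r / (r - 2)` degenerates at `r = 2`
  rcases hr.eq_or_lt with rfl | hr
  · norm_num at hbound ⊢
    exact eLpNorm'_le_nnreal_smul_eLpNorm'_of_ae_le_mul hbound two_pos
  have hr2 : 0 < r - 2 := by linarith
  have hr1 : 0 < r - 1 := by linarith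
  have hw' : AEStronglyMeasurable (fun x => ‖w x‖ ^ (r - 2)) μ :=
    (hw.norm.aemeasurable.pow_const _).aestronglyMeasurable
  have hbound' : ∀ᵐ x ∂μ, ‖h x‖ ≤ ‖(c : ℝ) * ‖u x‖ * ‖w x‖ ^ (r - 2)‖ :=
    hbound.mono fun x hx => by rwa [Real.norm_of_nonneg (by positivity)]
  calc eLpNorm' h (r / (r - 1)) μ
      ≤ eLpNorm' (fun x => (c : ℝ) * ‖u x‖ * ‖w x‖ ^ (r - 2)) (r / (r - 1)) μ :=
        eLpNorm'_mono_ae (by positivity) hbound'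
    _ ≤ c * eLpNorm' u r μ * eLpNorm' (fun x => ‖w x‖ ^ (r - 2)) (r / (r - 2)) μ := by
        refine eLpNorm'_le_eLpNorm'_mul_eLpNorm' hu hw' (fun a s => (c : ℝ) * ‖a‖ * s) c
          (ae_of_all _ fun x => ?_) (by positivity) ?_ ?_
        · rw [← NNReal.coe_le_coe]
          simp [abs_of_nonneg (Real.rpow_nonneg (norm_nonneg (w x)) (r - 2))]
        · rw [div_lt_iff₀ hr1]; nlinarith
        · field_simp; ring
    _ = c * eLpNorm' u r μ * eLpNorm' w r μ ^ (r - 2) := by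
        rw [eLpNorm'_norm_rpow w _ _ hr2, div_mul_cancel₀ r hr2.ne']

lemma eLpNorm'_norm_add_norm_le {f : α → E} {g : α → F} (hf : AEStronglyMeasurable f μ)
    (hg : AEStronglyMeasurable g μ) {q : ℝ} (hq : 1 ≤ q) :
    eLpNorm' (fun x => ‖f x‖ + ‖g x‖) q μ ≤ eLpNorm' f q μ + eLpNorm' g q μ := by
  have := eLpNorm'_add_le hf.norm hg.norm hq
  rwa [eLpNorm'_norm, eLpNorm'_norm] at this

end LpSeminorm

theorem stmt_13.{u} (d : ℕ) (hd : 1 ≤ d) (p p' : ℝ) (hp : 2 ≤ p)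
    (hp' : p' = p / (p - 1)) :
    ∃ C > (0 : ℝ), ∀ (Ω : Type u) [MeasurableSpace Ω] (μ : Measure Ω)
      (f g : Ω → EuclideanSpace ℝ (Fin d)), Measurable f → Measurable g →
      vecLpNorm μ f p ≠ ⊤ → vecLpNorm μ g p ≠ ⊤ →
      vecLpNorm μ (fun ω => pFlux d p (f ω) - pFlux d p (g ω)) p' ≤
        ENNReal.ofReal C * vecLpNorm μ (fun ω => f ω - g ω) p *
          (vecLpNorm μ f p + vecLpNorm μ g p) ^ (p - 2) := by
  refine ⟨p, by linarith, fun Ω _ μ f g hf hg _ _ => ?_⟩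
  have hp0 : 0 ≤ p := by linarith
  have hp'0 : 0 ≤ p / (p - 1) := div_nonneg hp0 (by linarith)
  have hpointwise : ∀ ω, ‖pFlux d p (f ω) - pFlux d p (g ω)‖ ≤
      (p.toNNReal : ℝ) * ‖f ω - g ω‖ * ‖‖f ω‖ + ‖g ω‖‖ ^ (p - 2) := fun ω => by
    rw [Real.coe_toNNReal p hp0, Real.norm_of_nonneg (by positivity)]
    exact norm_pFlux_sub_pFlux_le hp (f ω) (g ω)
  simp only [hp', vecLpNorm_eq_eLpNorm' _ _ hp0, vecLpNorm_eq_eLpNorm' _ _ hp'0]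
  calc eLpNorm' (fun ω => pFlux d p (f ω) - pFlux d p (g ω)) (p / (p - 1)) μ
      ≤ ENNReal.ofReal p * eLpNorm' (fun ω => f ω - g ω) p μ *
          eLpNorm' (fun ω => ‖f ω‖ + ‖g ω‖) p μ ^ (p - 2) :=
        eLpNorm'_le_mul_eLpNorm'_mul_eLpNorm'_rpow (hf.sub hg).aestronglyMeasurable
          (hf.norm.add hg.norm).aestronglyMeasurable hp (ae_of_all _ hpointwise)
    _ ≤ ENNReal.ofReal p * eLpNorm' (fun ω => f ω - g ω) p μ *
          (eLpNorm' f p μ + eLpNorm' g p μ) ^ (p - 2) := by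
        gcongr
        exact eLpNorm'_norm_add_norm_le hf.aestronglyMeasurable hg.aestronglyMeasurable
          (by linarith)
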